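/- arXiv:2203.05485 — 3 statements merged into one kernel-verified Lean document; each statement's English description precedes it below -/
import Mathlib

section
/- Let G be a simple graph on n vertices with exactly α·n^{3/2} edges (for some real α > 0). Then G has a spanning subgraph H (a subgraph on the same vertex set) such that e(H) ≥ (1/2)·α·n^{3/2}, and for every edge uv of H, the vertex u has at least (1/8)·α·n^{1/2} neighbours w in H satisfying d_H(v,w) ≥ α²/32, where d_H(v,w) denotes the number of common neighbours of v and w in H. -/
/-! Greedily delete edges `uv` that violate the condition, tracking the potential
`t·e(H) - Φ(H) - t·L(H)` with `Φ(H) = ∑_{x,y} min(d_H(x,y), γ)` and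
`L(H) = ∑_x min(deg_H x, β + t)`. It never decreases: if `deg u ≤ β + t` then `L` drops by one,
and otherwise more than `t` neighbours `w` of `u` have `d_H(v,w) < γ`, each of these codegrees
drops by one, so `Φ` drops by more than `t`. As `0 ≤ Φ ≤ n²γ` and `0 ≤ L ≤ n(β + t)`, at most
`n²γ/t + n(β + t)` edges are deleted, which for `β = α√n/8`, `γ = α²/32`, `t = α√n/6` is
`(23/48)·α n^{3/2}`. -/

open SimpleGraph

/-- The codegree of `u` and `v` in `H`: the number of common neighbours. -/
noncomputable def codeg {V : Type*} (H : SimpleGraph V) (u v : V) : ℕ :=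
  (H.neighborSet u ∩ H.neighborSet v).ncard

theorem WellFoundedLT.exists_le_of_forall_exists_lt {α β : Type*} [PartialOrder α]
    [WellFoundedLT α] [Preorder β] (P : α → Prop) (f : α → β)
    (h : ∀ a, ¬ P a → ∃ b < a, f a ≤ f b) (a : α) : ∃ b ≤ a, P b ∧ f a ≤ f b := by
  induction a using WellFoundedLT.induction with
  | _ a ih =>
    by_cases ha : P a
    · exact ⟨a, le_rfl, ha, le_rfl⟩
    obtain ⟨b, hba, hfb⟩ := h a ha
    obtain ⟨c, hcb, hc, hfc⟩ := ih b hba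
    exact ⟨c, hcb.trans hba.le, hc, hfb.trans hfc⟩

theorem Finset.sum_add_sum_le_sum_of_subset {ι M : Type*} [AddCommMonoid M] [PartialOrder M]
    [IsOrderedAddMonoid M] {s t : Finset ι} (hts : t ⊆ s) {f g c : ι → M}
    (hfg : ∀ i ∈ s, f i ≤ g i) (hc : ∀ i ∈ t, f i + c i ≤ g i) :
    ∑ i ∈ s, f i + ∑ i ∈ t, c i ≤ ∑ i ∈ s, g i := by
  classical
  rw [← Finset.sum_sdiff hts (f := f), ← Finset.sum_sdiff hts (f := g), add_assoc,
    ← Finset.sum_add_distrib]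
  exact add_le_add (Finset.sum_le_sum fun i hi => hfg i (Finset.mem_sdiff.1 hi).1)
    (Finset.sum_le_sum hc)

theorem Real.rpow_three_halves {x : ℝ} (hx : 0 ≤ x) :
    x ^ ((3 : ℝ) / 2) = (x ^ ((1 : ℝ) / 2)) ^ 3 := by
  rw [← Real.rpow_natCast, ← Real.rpow_mul hx]; norm_num

theorem Real.rpow_one_half_sq {x : ℝ} (hx : 0 ≤ x) : (x ^ ((1 : ℝ) / 2)) ^ 2 = x := by
  rw [← Real.rpow_natCast, ← Real.rpow_mul hx]; norm_num

namespace SimpleGraph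

variable {V : Type*}

section deleteEdge

variable {H : SimpleGraph V} {u v w : V}

lemma neighborSet_deleteEdges_singleton_left :
    (H.deleteEdges {s(u, v)}).neighborSet u = H.neighborSet u \ {v} := by
  ext x
  simp only [mem_neighborSet, deleteEdges_adj, Set.mem_singleton_iff, Set.mem_sdiff]
  grind [Sym2.eq_iff, SimpleGraph.irrefl]

lemma commonNeighbors_deleteEdges_singleton (hw : w ≠ u) :
    (H.deleteEdges {s(u, v)}).commonNeighbors v w = H.commonNeighbors v w \ {u} := by
  ext x
  simp only [commonNeighbors, Set.mem_inter_iff, mem_neighborSet, deleteEdges_adj,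
    Set.mem_singleton_iff, Set.mem_sdiff]
  grind [Sym2.eq_iff, SimpleGraph.irrefl]

variable [Finite V]

lemma ncard_edgeSet_deleteEdges_singleton_add_one (huv : H.Adj u v) :
    (H.deleteEdges {s(u, v)}).edgeSet.ncard + 1 = H.edgeSet.ncard := by
  rw [edgeSet_deleteEdges]
  exact Set.ncard_sdiff_singleton_add_one huv (Set.toFinite _)

lemma ncard_neighborSet_deleteEdges_singleton_add_one (huv : H.Adj u v) :
    ((H.deleteEdges {s(u, v)}).neighborSet u).ncard + 1 = (H.neighborSet u).ncard := by
  rw [neighborSet_deleteEdges_singleton_left]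
  exact Set.ncard_sdiff_singleton_add_one huv (Set.toFinite _)

lemma codeg_deleteEdges_singleton_add_one (huv : H.Adj u v) (huw : H.Adj u w) :
    codeg (H.deleteEdges {s(u, v)}) v w + 1 = codeg H v w := by
  have := commonNeighbors_deleteEdges_singleton (H := H) (v := v) huw.ne'
  simp only [commonNeighbors] at this
  rw [codeg, this]
  exact Set.ncard_sdiff_singleton_add_one ⟨huv.symm, huw.symm⟩ (Set.toFinite _)

end deleteEdge

lemma codeg_mono [Finite V] {H H' : SimpleGraph V} (h : H ≤ H') (x y : V) :
    codeg H x y ≤ codeg H' x y :=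
  Set.ncard_le_ncard (Set.inter_subset_inter (fun _ hz => h hz) (fun _ hz => h hz))

lemma ncard_neighborSet_mono [Finite V] {H H' : SimpleGraph V} (h : H ≤ H') (x : V) :
    (H.neighborSet x).ncard ≤ (H'.neighborSet x).ncard :=
  Set.ncard_le_ncard fun _ hy => h hy

lemma ncard_le_codeg_add_ncard_codeg_lt [Finite V] (H : SimpleGraph V) (γ : ℝ) (u v : V) :
    ({w | H.Adj u w ∧ γ ≤ codeg H v w}.ncard : ℝ) +
        {w | H.Adj u w ∧ codeg H v w < γ}.ncard = (H.neighborSet u).ncard := by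
  rw [← Nat.cast_add, ← Set.ncard_union_eq _ (Set.toFinite _) (Set.toFinite _)]
  · congr
    ext w
    simp only [Set.mem_union, Set.mem_ofPred_eq, mem_neighborSet]
    grind
  · exact Set.disjoint_left.2 fun w hle hlt => not_le.2 hlt.2 hle.2

variable [Fintype V]

def IsCleaned (H : SimpleGraph V) (β γ : ℝ) : Prop :=
  ∀ u v, H.Adj u v → β ≤ ({w | H.Adj u w ∧ γ ≤ codeg H v w}.ncard : ℝ)

noncomputable def codegPotential (H : SimpleGraph V) (γ : ℝ) : ℝ :=
  ∑ x, ∑ y, min (codeg H x y : ℝ) γ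

noncomputable def degPotential (H : SimpleGraph V) (D : ℝ) : ℝ :=
  ∑ x, min ((H.neighborSet x).ncard : ℝ) D

section potentials

variable {H H' : SimpleGraph V} {γ D : ℝ}

lemma codegPotential_mono (h : H ≤ H') : H.codegPotential γ ≤ H'.codegPotential γ :=
  Finset.sum_le_sum fun x _ => Finset.sum_le_sum fun y _ =>
    min_le_min_right _ (by exact_mod_cast codeg_mono h x y)

lemma degPotential_mono (h : H ≤ H') : H.degPotential D ≤ H'.degPotential D :=
  Finset.sum_le_sum fun x _ => min_le_min_right _ (by exact_mod_cast ncard_neighborSet_mono h x)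

lemma codegPotential_nonneg (hγ : 0 ≤ γ) : 0 ≤ H.codegPotential γ :=
  Finset.sum_nonneg fun _ _ => Finset.sum_nonneg fun _ _ => le_min (by positivity) hγ

lemma degPotential_nonneg (hD : 0 ≤ D) : 0 ≤ H.degPotential D :=
  Finset.sum_nonneg fun _ _ => le_min (by positivity) hD

lemma codegPotential_le : H.codegPotential γ ≤ Fintype.card V ^ 2 * γ := by
  calc H.codegPotential γ ≤ ∑ _x : V, ∑ _y : V, γ :=
        Finset.sum_le_sum fun _ _ => Finset.sum_le_sum fun _ _ => min_le_right _ _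
    _ = Fintype.card V ^ 2 * γ := by simp [sq, mul_assoc]

lemma degPotential_le : H.degPotential D ≤ Fintype.card V * D := by
  calc H.degPotential D ≤ ∑ _x : V, D := Finset.sum_le_sum fun _ _ => min_le_right _ _
    _ = Fintype.card V * D := by simp

variable {u v : V}

lemma degPotential_deleteEdges_singleton_add_one (huv : H.Adj u v)
    (hu : ((H.neighborSet u).ncard : ℝ) ≤ D) :
    (H.deleteEdges {s(u, v)}).degPotential D + 1 ≤ H.degPotential D := by
  have hdeg : (((H.deleteEdges {s(u, v)}).neighborSet u).ncard : ℝ) + 1 =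
      (H.neighborSet u).ncard := by
    exact_mod_cast ncard_neighborSet_deleteEdges_singleton_add_one huv
  have hdrop : min (((H.deleteEdges {s(u, v)}).neighborSet u).ncard : ℝ) D + 1 ≤
      min ((H.neighborSet u).ncard : ℝ) D := by
    rw [min_eq_left hu, ← hdeg]
    exact add_le_add_left (min_le_left _ _) 1
  simpa [degPotential] using Finset.sum_add_sum_le_sum_of_subset (Finset.subset_univ {u})
    (c := fun _ => (1 : ℝ)) (fun x _ => min_le_min_right D
      (by exact_mod_cast ncard_neighborSet_mono (deleteEdges_le _) x)) (by simpa using hdrop)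

lemma codegPotential_deleteEdges_singleton_add_ncard (huv : H.Adj u v) :
    (H.deleteEdges {s(u, v)}).codegPotential γ + {w | H.Adj u w ∧ codeg H v w < γ}.ncard ≤
      H.codegPotential γ := by
  classical
  set H₂ := H.deleteEdges {s(u, v)}
  have hmono : ∀ x y, min (codeg H₂ x y : ℝ) γ ≤ min (codeg H x y : ℝ) γ := fun x y =>
    min_le_min_right γ (by exact_mod_cast codeg_mono (deleteEdges_le _) x y)
  have hdrop : ∀ w ∈ {w | H.Adj u w ∧ codeg H v w < γ}.toFinset,
      min (codeg H₂ v w : ℝ) γ + 1 ≤ min (codeg H v w : ℝ) γ := by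
    intro w hw
    obtain ⟨huw, hlt⟩ := Set.mem_toFinset.1 hw
    have hcodeg : (codeg H₂ v w : ℝ) + 1 = codeg H v w := by
      exact_mod_cast codeg_deleteEdges_singleton_add_one huv huw
    rw [min_eq_left hlt.le, ← hcodeg]
    exact add_le_add_left (min_le_left _ _) 1
  have hrow := Finset.sum_add_sum_le_sum_of_subset (Finset.subset_univ _) (c := fun _ => (1 : ℝ))
    (fun y _ => hmono v y) hdrop
  rw [Finset.sum_const, nsmul_one, ← Set.ncard_eq_toFinset_card'] at hrow
  simpa [codegPotential] using Finset.sum_add_sum_le_sum_of_subset (Finset.subset_univ {v})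
    (c := fun _ => ({w | H.Adj u w ∧ codeg H v w < γ}.ncard : ℝ))
    (fun x _ => Finset.sum_le_sum fun y _ => hmono x y) (by simpa using hrow)

end potentials

noncomputable def cleaningPotential (H : SimpleGraph V) (β γ t : ℝ) : ℝ :=
  t * H.edgeSet.ncard - H.codegPotential γ - t * H.degPotential (β + t)

lemma cleaningPotential_le_deleteEdges_singleton {H : SimpleGraph V} {β γ t : ℝ} {u v : V}
    (ht : 0 ≤ t) (huv : H.Adj u v)
    (hbad : ({w | H.Adj u w ∧ γ ≤ codeg H v w}.ncard : ℝ) < β) :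
    H.cleaningPotential β γ t ≤ (H.deleteEdges {s(u, v)}).cleaningPotential β γ t := by
  set H₂ := H.deleteEdges {s(u, v)}
  have he : (H₂.edgeSet.ncard : ℝ) + 1 = H.edgeSet.ncard := by
    exact_mod_cast ncard_edgeSet_deleteEdges_singleton_add_one huv
  have hΦ := codegPotential_deleteEdges_singleton_add_ncard (γ := γ) huv
  have hL : H₂.degPotential (β + t) ≤ H.degPotential (β + t) :=
    degPotential_mono (deleteEdges_le _)
  unfold cleaningPotential
  rcases le_or_gt ((H.neighborSet u).ncard : ℝ) (β + t) with hu | hu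
  · have := degPotential_deleteEdges_singleton_add_one huv hu
    nlinarith [codegPotential_mono (γ := γ) (deleteEdges_le {s(u, v)} : H₂ ≤ H)]
  · -- more than `t` neighbours `w` of `u` have `codeg v w < γ`, and each loses `u`
    have := ncard_le_codeg_add_ncard_codeg_lt H γ u v
    nlinarith

theorem exists_isCleaned_le (G : SimpleGraph V) {β γ t : ℝ} (hβ : 0 ≤ β) (hγ : 0 ≤ γ)
    (ht : 0 ≤ t) :
    ∃ H ≤ G, H.IsCleaned β γ ∧ t * G.edgeSet.ncard ≤
      t * H.edgeSet.ncard + Fintype.card V ^ 2 * γ + t * (Fintype.card V * (β + t)) := by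
  obtain ⟨H, hHG, hH, hpot⟩ := WellFoundedLT.exists_le_of_forall_exists_lt
    (fun H : SimpleGraph V => H.IsCleaned β γ) (cleaningPotential · β γ t) (fun H hH => by
      obtain ⟨u, v, huv, hbad⟩ : ∃ u v, H.Adj u v ∧
          ({w | H.Adj u w ∧ γ ≤ codeg H v w}.ncard : ℝ) < β := by
        simpa [IsCleaned] using hH
      refine ⟨H.deleteEdges {s(u, v)}, ?_, cleaningPotential_le_deleteEdges_singleton ht huv hbad⟩
      exact (deleteEdges_le _).lt_of_ne fun h =>
        Set.disjoint_singleton_right.1 (deleteEdges_eq_self.1 h) huv) G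
  refine ⟨H, hHG, hH, ?_⟩
  have := mul_le_mul_of_nonneg_left (degPotential_le (H := G) (D := β + t)) ht
  have := mul_nonneg ht (degPotential_nonneg (H := H) (add_nonneg hβ ht))
  have := codegPotential_le (H := G) (γ := γ)
  have := codegPotential_nonneg (H := H) hγ
  simp only [cleaningPotential] at hpot
  linarith

end SimpleGraph

/-- Lemma 2.2: if `G` is an `n`-vertex graph with exactly `α · n^{3/2}` edges,
then `G` has a spanning subgraph `H` with `e(H) ≥ (1/2) α n^{3/2}` such that for
every edge `uv` of `H`, `u` has at least `(1/8) α n^{1/2}` neighbours `w` in `H`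
with codegree `d_H(v,w) ≥ α²/32`. -/
theorem cleaned_subgraph (V : Type) [Fintype V] (n : ℕ) (hn : Fintype.card V = n)
    (α : ℝ) (hα : 0 < α) (G : SimpleGraph V)
    (hG : (G.edgeSet.ncard : ℝ) = α * (n : ℝ) ^ ((3 : ℝ) / 2)) :
    ∃ H : SimpleGraph V, H ≤ G ∧
      (1 / 2) * α * (n : ℝ) ^ ((3 : ℝ) / 2) ≤ (H.edgeSet.ncard : ℝ) ∧
      ∀ u v : V, H.Adj u v →
        (1 / 8) * α * (n : ℝ) ^ ((1 : ℝ) / 2) ≤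
          (({w : V | H.Adj u w ∧ α ^ 2 / 32 ≤ (codeg H v w : ℝ)}).ncard : ℝ) := by
  have hr : 0 ≤ (n : ℝ) ^ ((1 : ℝ) / 2) := by positivity
  have hr2 := Real.rpow_one_half_sq n.cast_nonneg
  rw [Real.rpow_three_halves n.cast_nonneg] at hG ⊢
  generalize (n : ℝ) ^ ((1 : ℝ) / 2) = r at hr hr2 hG ⊢
  obtain ⟨H, hHG, hH, hbound⟩ := exists_isCleaned_le G (β := 1 / 8 * α * r) (γ := α ^ 2 / 32)
    (t := α * r / 6) (by positivity) (by positivity) (by positivity)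
  refine ⟨H, hHG, ?_, hH⟩
  rw [hG, hn, ← hr2] at hbound
  -- after dividing by `t = α r / 6`, the losses add up to `(23 / 48) α r³`
  rcases hr.eq_or_lt with rfl | hr
  · simp
  · nlinarith [mul_pos hα hr]
end

section
/- Let t ≥ 2 be an integer, let α be a real number with α ≥ 4t, let K = 12000, let k be a positive integer, and let n be a sufficiently large positive integer. Let G be a simple graph on n vertices such that: (a) e(G) ≥ α·n^{3/2}; (b) Δ(G) ≤ K·α·n^{1/2}; (c) for every edge uv of G, the vertex u has at least α·n^{1/2} neighbours w in G with d_G(v,w) ≥ α. Then there exist real numbers s_1, s_2, …, s_{t−1} ≥ 1 such that the number of (s_1, …, s_{t−1})-good t-ladders in the k-th tensor power G^k is at least α^{tk} · n^{(t/2+1)k} · (∏_{i=1}^{t−1} s_i) / (4^{k+1} · log₂(n^k))^{t−1}. -/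
open SimpleGraph Finset

/-- The `k`-th tensor power of `G`: vertices are `k`-tuples of vertices of `G`,
with two tuples adjacent iff they are adjacent in `G` in every coordinate. -/
def tensorPow {V : Type*} (G : SimpleGraph V) (k : ℕ) : SimpleGraph (Fin k → V) where
  Adj x y := x ≠ y ∧ ∀ j, G.Adj (x j) (y j)
  symm := ⟨fun x y h => ⟨h.1.symm, fun j => (h.2 j).symm⟩⟩
  loopless := ⟨fun x h => h.1 rfl⟩

/-- A `t`-ladder in `H` (vertices indexed from `0` to `t-1`):
`x_i x_{i+1}`, `y_i y_{i+1}` are edges for `i < t-1`, and `x_i y_i` is an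
edge for all `i`. -/
def IsLadder {W : Type*} (H : SimpleGraph W) (t : ℕ) (x y : Fin t → W) : Prop :=
  (∀ i : Fin t, H.Adj (x i) (y i)) ∧
  ∀ (i : Fin t) (h : (i : ℕ) + 1 < t),
    H.Adj (x i) (x ⟨(i : ℕ) + 1, h⟩) ∧ H.Adj (y i) (y ⟨(i : ℕ) + 1, h⟩)

/-- An `(s_0, …, s_{t-2})`-good `t`-ladder in `G^k` (with respect to the
parameter `α`): a `t`-ladder `(x_0, y_0, …, x_{t-1}, y_{t-1})` in `G^k` such
that for each `i < t-1` the codegree of `x_{i+1}` and `y_i` in `G^k` is at most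
`s i`, for each `i < t-1` and each coordinate `j` the codegree of `x_{i+1}(j)`
and `y_i(j)` in `G` is at least `α`, and in each coordinate `j` the `2t`
vertices `x_0(j), …, x_{t-1}(j), y_0(j), …, y_{t-1}(j)` are pairwise distinct. -/
def IsGoodLadder {V : Type*} (G : SimpleGraph V) (k t : ℕ) (α : ℝ) (s : ℕ → ℝ)
    (x y : Fin t → (Fin k → V)) : Prop :=
  IsLadder (tensorPow G k) t x y ∧
  (∀ (i : Fin t) (h : (i : ℕ) + 1 < t),
    (codeg (tensorPow G k) (x ⟨(i : ℕ) + 1, h⟩) (y i) : ℝ) ≤ s i ∧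
    ∀ j : Fin k, α ≤ (codeg G (x ⟨(i : ℕ) + 1, h⟩ j) (y i j) : ℝ)) ∧
  ∀ j : Fin k,
    Function.Injective (fun p : Fin t × Bool => if p.2 then x p.1 j else y p.1 j)

/-!
Good ladders are grown one rung at a time, coordinate by coordinate in `G^k`. Given a good ladder
ending in the rung `x_m y_m`, hypothesis (c) leaves at least `α√n - 2t ≥ α√n / 2` unused choices
for `x_{m+1}(j)` in every coordinate `j`, each with `d_G(x_{m+1}(j), y_m(j)) ≥ α`; then `y_{m+1}(j)`
may be any unused common neighbour of `x_{m+1}(j)` and `y_m(j)`, and at least half of them are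
unused because `α ≥ 4t`. Codegrees in `G^k` are products of codegrees in `G`, so there are at least
`d_{G^k}(x_{m+1}, y_m) / 2^k` choices for `y_{m+1}`. Sorting the pairs (ladder, `x_{m+1}`) into the
`log₂(n^k) + 1` dyadic classes `[2^j, 2^{j+1})` of this codegree and keeping the largest class makes
`s_m = 2^{j+1}` a valid codegree bound that loses only a factor `2^{k+1} (log₂(n^k) + 1)` in the
count. One-rung ladders are the `(2 e(G))^k` ordered edges of `G^k`.
-/

lemma Fin.forall_mk_add_one_iff {n : ℕ} {P : Fin (n + 1) → Fin (n + 1) → Prop} :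
    (∀ (i : Fin (n + 1)) (h : (i : ℕ) + 1 < n + 1), P i ⟨i + 1, h⟩) ↔
      ∀ i : Fin n, P i.castSucc i.succ :=
  ⟨fun h i => h i.castSucc (by simp), fun h ⟨i, _⟩ hi => h ⟨i, by simp at hi; omega⟩⟩

lemma Fin.snoc_apply_apply {β γ : Type*} {m : ℕ} (x : Fin m → β → γ) (a : β → γ)
    (i : Fin (m + 1)) (j : β) :
    (Fin.snoc x a : Fin (m + 1) → β → γ) i j = (Fin.snoc (x · j) (a j) : Fin (m + 1) → γ) i := by
  induction i using Fin.lastCases <;> simp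

lemma isLadder_succ_iff {W : Type*} {H : SimpleGraph W} {m : ℕ} {x y : Fin (m + 1) → W} :
    IsLadder H (m + 1) x y ↔ (∀ i, H.Adj (x i) (y i)) ∧
      ∀ i : Fin m, H.Adj (x i.castSucc) (x i.succ) ∧ H.Adj (y i.castSucc) (y i.succ) := by
  rw [IsLadder,
    Fin.forall_mk_add_one_iff (P := fun i i' => H.Adj (x i) (x i') ∧ H.Adj (y i) (y i'))]

lemma IsLadder.snoc {W : Type*} {H : SimpleGraph W} {m : ℕ} {x y : Fin (m + 1) → W} {a b : W}
    (h : IsLadder H (m + 1) x y) (hxa : H.Adj (x (Fin.last m)) a)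
    (hyb : H.Adj (y (Fin.last m)) b) (hab : H.Adj a b) :
    IsLadder H (m + 2) (Fin.snoc x a) (Fin.snoc y b) := by
  rw [isLadder_succ_iff] at h ⊢
  refine ⟨fun i => ?_, fun i => ?_⟩
  · induction i using Fin.lastCases <;> simp [hab, h.1]
  · induction i using Fin.lastCases with
    | last => simpa using ⟨hxa, hyb⟩
    | cast i => simpa only [Fin.succ_castSucc, Fin.snoc_castSucc] using h.2 i

section TensorPower

variable {V : Type*} (G : SimpleGraph V) {k : ℕ}

lemma codeg_comm (u v : V) : codeg G u v = codeg G v u := by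
  rw [codeg, codeg, Set.inter_comm]

lemma codeg_le_card [Fintype V] (u v : V) : codeg G u v ≤ Fintype.card V := by
  rw [codeg, ← Nat.card_eq_fintype_card]
  exact Set.ncard_le_card _

lemma tensorPow_adj_iff (hk : 0 < k) {x y : Fin k → V} :
    (tensorPow G k).Adj x y ↔ ∀ j, G.Adj (x j) (y j) :=
  ⟨fun h => h.2, fun h => ⟨fun e => (h ⟨0, hk⟩).ne (congrFun e _), h⟩⟩

lemma codeg_tensorPow (hk : 0 < k) (x y : Fin k → V) :
    codeg (tensorPow G k) x y = ∏ j, codeg G (x j) (y j) := by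
  have hcommon : (tensorPow G k).commonNeighbors x y =
      Set.univ.pi fun j => G.commonNeighbors (x j) (y j) := by
    ext w
    simp [mem_commonNeighbors, tensorPow_adj_iff G hk, forall_and]
  rw [codeg, ← Nat.card_coe_set_eq]
  change Nat.card ((tensorPow G k).commonNeighbors x y) = _
  rw [hcommon, Nat.card_congr (Equiv.Set.univPi _), Nat.card_pi]
  rfl

end TensorPower

def ladderVertex {β : Type*} {t : ℕ} (x y : Fin t → β) (p : Fin t × Bool) : β :=
  if p.2 then x p.1 else y p.1

section LadderVertex

variable {β : Type*} {m : ℕ} (x y : Fin m → β) (a b : β)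

@[simp] lemma ladderVertex_snoc_castSucc (i : Fin m) (c : Bool) :
    ladderVertex (Fin.snoc x a : Fin (m + 1) → β) (Fin.snoc y b) (i.castSucc, c) =
      ladderVertex x y (i, c) := by
  simp [ladderVertex]

@[simp] lemma ladderVertex_snoc_last (c : Bool) :
    ladderVertex (Fin.snoc x a : Fin (m + 1) → β) (Fin.snoc y b) (Fin.last m, c) =
      if c then a else b := by
  simp [ladderVertex]

variable {x y a b}

lemma ladderVertex_snoc_injective (h : Function.Injective (ladderVertex x y)) (hab : a ≠ b)
    (ha : a ∉ Set.range (ladderVertex x y)) (hb : b ∉ Set.range (ladderVertex x y)) :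
    Function.Injective (ladderVertex (Fin.snoc x a : Fin (m + 1) → β) (Fin.snoc y b)) := by
  have fresh : ∀ p (c : Bool), ladderVertex x y p ≠ if c then a else b := by
    rintro p (_ | _) e
    exacts [hb ⟨p, e⟩, ha ⟨p, e⟩]
  rintro ⟨i, c⟩ ⟨i', c'⟩ e
  induction i using Fin.lastCases <;> induction i' using Fin.lastCases
  · cases c <;> cases c' <;> simp_all [eq_comm]
  · exact absurd e.symm (by simpa using fresh _ c)
  · exact absurd e (by simpa using fresh _ c')
  · simpa [Prod.ext_iff] using h (by simpa using e)

end LadderVertex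

section GoodLadder

variable {V : Type*} (G : SimpleGraph V) {k m : ℕ} {α : ℝ} {s : ℕ → ℝ}

lemma isGoodLadder_succ_iff {x y : Fin (m + 1) → Fin k → V} :
    IsGoodLadder G k (m + 1) α s x y ↔ IsLadder (tensorPow G k) (m + 1) x y ∧
      (∀ i : Fin m, (codeg (tensorPow G k) (x i.succ) (y i.castSucc) : ℝ) ≤ s i ∧
        ∀ j, α ≤ (codeg G (x i.succ j) (y i.castSucc j) : ℝ)) ∧
      ∀ j, Function.Injective (ladderVertex (x · j) (y · j)) := by
  rw [IsGoodLadder, Fin.forall_mk_add_one_iff (P := fun i i' =>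
    (codeg (tensorPow G k) (x i') (y i) : ℝ) ≤ s i ∧ ∀ j, α ≤ (codeg G (x i' j) (y i j) : ℝ))]
  rfl

variable {G}

lemma IsGoodLadder.snoc (hk : 0 < k) {x y : Fin (m + 1) → Fin k → V} {a b : Fin k → V} {σ : ℝ}
    (h : IsGoodLadder G k (m + 1) α s x y)
    (hxa : ∀ j, G.Adj (x (Fin.last m) j) (a j)) (hyb : ∀ j, G.Adj (y (Fin.last m) j) (b j))
    (hab : ∀ j, G.Adj (a j) (b j)) (hσ : (codeg (tensorPow G k) a (y (Fin.last m)) : ℝ) ≤ σ)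
    (hα : ∀ j, α ≤ (codeg G (a j) (y (Fin.last m) j) : ℝ))
    (ha : ∀ j, a j ∉ Set.range (ladderVertex (x · j) (y · j)))
    (hb : ∀ j, b j ∉ Set.range (ladderVertex (x · j) (y · j))) :
    IsGoodLadder G k (m + 2) α (Function.update s m σ) (Fin.snoc x a) (Fin.snoc y b) := by
  rw [isGoodLadder_succ_iff] at h ⊢
  obtain ⟨hladder, hcodeg, hinj⟩ := h
  refine ⟨hladder.snoc ((tensorPow_adj_iff G hk).2 hxa) ((tensorPow_adj_iff G hk).2 hyb)
    ((tensorPow_adj_iff G hk).2 hab), fun i => ?_, fun j => ?_⟩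
  · induction i using Fin.lastCases with
    | last => simpa using ⟨hσ, hα⟩
    | cast i =>
      rw [Fin.succ_castSucc]
      simpa only [Fin.snoc_castSucc, Fin.val_castSucc, Function.update_of_ne i.is_lt.ne]
        using hcodeg i
  · simp only [Fin.snoc_apply_apply]
    exact ladderVertex_snoc_injective (hinj j) (hab j).ne (ha j) (hb j)

lemma isGoodLadder_one (hk : 0 < k) {x y : Fin 1 → Fin k → V}
    (h : ∀ j, G.Adj (x 0 j) (y 0 j)) : IsGoodLadder G k 1 α s x y := by
  refine (isGoodLadder_succ_iff G).2 ⟨isLadder_succ_iff.2 ⟨?_, finZeroElim⟩, finZeroElim, ?_⟩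
  · simpa [Fin.forall_fin_one, tensorPow_adj_iff G hk] using h
  · rintro j ⟨i, c⟩ ⟨i', c'⟩ e
    fin_cases i; fin_cases i'
    cases c <;> cases c' <;> simp_all [ladderVertex, (h j).ne, (h j).ne']

end GoodLadder

section Counting

open scoped Classical

variable {V : Type*} [Fintype V] (G : SimpleGraph V) {k : ℕ} {α : ℝ} {s : ℕ → ℝ}

noncomputable def goodLadders (k t : ℕ) (α : ℝ) (s : ℕ → ℝ) :
    Finset ((Fin t → Fin k → V) × (Fin t → Fin k → V)) :=
  {p | IsGoodLadder G k t α s p.1 p.2}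

lemma card_goodLadders (k t : ℕ) (α : ℝ) (s : ℕ → ℝ) :
    #(goodLadders G k t α s) = Nat.card {p : (Fin t → Fin k → V) × (Fin t → Fin k → V) //
      IsGoodLadder G k t α s p.1 p.2} := by
  rw [goodLadders, Nat.card_eq_fintype_card, Fintype.card_subtype]

lemma codeg_eq_card (u v : V) : codeg G u v = #{w | G.Adj u w ∧ G.Adj v w} := by
  rw [codeg, ← Set.ncard_coe_finset]
  congr
  ext
  simp

lemma card_dart_pow_le_card_goodLadders_one (hk : 0 < k) :
    Fintype.card G.Dart ^ k ≤ #(goodLadders G k 1 α s) := by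
  calc Fintype.card G.Dart ^ k = #(univ : Finset (Fin k → G.Dart)) := by simp
    _ ≤ _ := card_le_card_of_injOn (fun d => (fun _ j => (d j).fst, fun _ j => (d j).snd))
      (fun d _ => ?_) (fun d _ d' _ e => ?_)
  · simpa [goodLadders] using isGoodLadder_one hk fun j => (d j).adj
  · simp only [Prod.mk.injEq, funext_iff] at e
    exact funext fun j => Dart.ext _ _ (Prod.ext (e.1 0 j) (e.2 0 j))

end Counting

lemma natLog_add_one_le_two_mul_logb {x : ℕ} (hx : 2 ≤ x) :
    (Nat.log 2 x + 1 : ℝ) ≤ 2 * Real.logb 2 x := by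
  have hlog : 1 ≤ Real.logb 2 x := by
    rw [Real.le_logb_iff_rpow_le one_lt_two (by positivity)]
    exact_mod_cast hx
  have := Real.natLog_le_logb x 2
  push_cast at this
  linarith

lemma exists_card_div_le_card_dyadic_class {ι : Type*} (S : Finset ι) (c : ι → ℕ) {N : ℕ}
    (hc : ∀ z ∈ S, 0 < c z ∧ c z ≤ N) :
    ∃ j : ℕ, (#S : ℝ) / (Nat.log 2 N + 1) ≤ #{z ∈ S | 2 ^ j ≤ c z ∧ c z < 2 ^ (j + 1)} := by
  obtain ⟨j, -, hj⟩ := exists_le_card_fiber_of_nsmul_le_card_of_maps_to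
    (f := fun z => Nat.log 2 (c z)) (t := range (Nat.log 2 N + 1))
    (fun z hz => mem_range.2 (Nat.lt_succ_of_le (Nat.log_mono_right (hc z hz).2)))
    nonempty_range_add_one (b := (#S : ℝ) / (Nat.log 2 N + 1))
    (by rw [card_range, nsmul_eq_mul]; push_cast; exact (mul_div_cancel₀ _ (by positivity)).le)
  refine ⟨j, hj.trans ?_⟩
  gcongr with z hz
  rintro rfl
  exact ⟨Nat.pow_log_le_self 2 (hc z hz).1.ne', Nat.lt_pow_succ_log_self one_lt_two _⟩

section Extension

open scoped Classical

variable {V : Type*} [Fintype V] (G : SimpleGraph V) {k m : ℕ} (α : ℝ)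

noncomputable def nextXCandidates (x y : Fin (m + 1) → Fin k → V) (j : Fin k) : Finset V :=
  ({w | G.Adj (x (Fin.last m) j) w ∧ α ≤ (codeg G (y (Fin.last m) j) w : ℝ)} : Finset V) \
    univ.image (ladderVertex (x · j) (y · j))

noncomputable def nextYCandidates (x y : Fin (m + 1) → Fin k → V) (a : Fin k → V) (j : Fin k) :
    Finset V :=
  ({w | G.Adj (a j) w ∧ G.Adj (y (Fin.last m) j) w} : Finset V) \
    univ.image (ladderVertex (x · j) (y · j))

variable {G α}

lemma sub_le_card_sdiff_ladderVertex {β : Type*} {t : ℕ} (S : Finset β) (x y : Fin t → β) :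
    (#S : ℝ) - 2 * t ≤ #(S \ univ.image (ladderVertex x y)) := by
  have hsdiff := card_le_card_sdiff_add_card (s := S) (t := univ.image (ladderVertex x y))
  have himage : #(univ.image (ladderVertex x y)) ≤ 2 * t :=
    card_image_le.trans (by simp [mul_comm])
  have : (#S : ℝ) ≤ #(S \ univ.image (ladderVertex x y)) + 2 * t := by exact_mod_cast by omega
  linarith

lemma sub_le_card_nextXCandidates {A : ℝ}
    (hA : ∀ u v, G.Adj u v → A ≤ ({w | G.Adj u w ∧ α ≤ (codeg G v w : ℝ)}.ncard : ℝ))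
    {x y : Fin (m + 1) → Fin k → V} {j : Fin k}
    (hxy : G.Adj (x (Fin.last m) j) (y (Fin.last m) j)) :
    A - 2 * (m + 1) ≤ #(nextXCandidates G α x y j) := by
  have hfilter : A ≤ #({w | G.Adj (x (Fin.last m) j) w ∧
      α ≤ (codeg G (y (Fin.last m) j) w : ℝ)} : Finset V) := by
    simpa [← Set.ncard_coe_finset] using hA _ _ hxy
  calc A - 2 * (m + 1) ≤ #({w | G.Adj (x (Fin.last m) j) w ∧
        α ≤ (codeg G (y (Fin.last m) j) w : ℝ)} : Finset V) - 2 * ((m + 1 : ℕ) : ℝ) := by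
        push_cast; linarith
    _ ≤ _ := sub_le_card_sdiff_ladderVertex _ _ _

lemma sub_le_card_nextYCandidates (x y : Fin (m + 1) → Fin k → V) (a : Fin k → V) (j : Fin k) :
    (codeg G (a j) (y (Fin.last m) j) : ℝ) - 2 * (m + 1) ≤ #(nextYCandidates G x y a j) := by
  have := sub_le_card_sdiff_ladderVertex (β := V)
    {w | G.Adj (a j) w ∧ G.Adj (y (Fin.last m) j) w} (x · j) (y · j)
  rw [codeg_eq_card]
  push_cast at this
  exact this

lemma mem_nextXCandidates {x y : Fin (m + 1) → Fin k → V} {j : Fin k} {w : V} :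
    w ∈ nextXCandidates G α x y j ↔
      (G.Adj (x (Fin.last m) j) w ∧ α ≤ (codeg G (y (Fin.last m) j) w : ℝ)) ∧
        w ∉ Set.range (ladderVertex (x · j) (y · j)) := by
  simp [nextXCandidates]

lemma mem_nextYCandidates {x y : Fin (m + 1) → Fin k → V} {a : Fin k → V} {j : Fin k} {w : V} :
    w ∈ nextYCandidates G x y a j ↔ (G.Adj (a j) w ∧ G.Adj (y (Fin.last m) j) w) ∧
      w ∉ Set.range (ladderVertex (x · j) (y · j)) := by
  simp [nextYCandidates]

lemma card_mul_le_card_sigma_nextXCandidates {A : ℝ}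
    (hA : ∀ u v, G.Adj u v → A ≤ ({w | G.Adj u w ∧ α ≤ (codeg G v w : ℝ)}.ncard : ℝ))
    (hAm : 4 * (m + 1) ≤ A) (s : ℕ → ℝ) :
    (#(goodLadders G k (m + 1) α s) : ℝ) * (A / 2) ^ k ≤
      #((goodLadders G k (m + 1) α s).sigma fun p =>
        Fintype.piFinset (nextXCandidates G α p.1 p.2)) := by
  rw [card_sigma, ← nsmul_eq_mul]
  push_cast
  refine card_nsmul_le_sum _ _ _ fun p hp => ?_
  have hrung : ∀ j, G.Adj (p.1 (Fin.last m) j) (p.2 (Fin.last m) j) :=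
    ((mem_filter.1 hp).2.1.1 (Fin.last m)).2
  rw [Fintype.card_piFinset]
  push_cast
  calc (A / 2) ^ k = ∏ _j : Fin k, A / 2 := by rw [prod_const, card_univ, Fintype.card_fin]
    _ ≤ _ := prod_le_prod (fun _ _ => by linarith) fun j _ =>
      (sub_le_card_nextXCandidates hA (hrung j)).trans' (by linarith)

lemma codeg_pos_of_mem_nextXCandidates (hk : 0 < k) (hα : 0 < α)
    {x y : Fin (m + 1) → Fin k → V} {a : Fin k → V}
    (ha : a ∈ Fintype.piFinset (nextXCandidates G α x y)) :
    0 < codeg (tensorPow G k) a (y (Fin.last m)) := by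
  rw [codeg_tensorPow G hk]
  refine prod_pos fun j _ => ?_
  have := (mem_nextXCandidates.1 (Fintype.mem_piFinset.1 ha j)).1.2
  rw [codeg_comm] at this
  exact_mod_cast hα.trans_le this

lemma codeg_div_le_card_nextYCandidates (hk : 0 < k) (hα : 4 * (m + 1) ≤ α)
    {x y : Fin (m + 1) → Fin k → V} {a : Fin k → V}
    (ha : a ∈ Fintype.piFinset (nextXCandidates G α x y)) :
    (codeg (tensorPow G k) a (y (Fin.last m)) : ℝ) / 2 ^ k ≤
      #(Fintype.piFinset (nextYCandidates G x y a)) := by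
  rw [Fintype.card_piFinset, codeg_tensorPow G hk]
  push_cast
  rw [show (2 : ℝ) ^ k = ∏ _j : Fin k, 2 by simp, ← prod_div_distrib]
  refine prod_le_prod (fun _ _ => by positivity) fun j _ => ?_
  have hcodeg := (mem_nextXCandidates.1 (Fintype.mem_piFinset.1 ha j)).1.2
  rw [codeg_comm] at hcodeg
  linarith [sub_le_card_nextYCandidates (G := G) x y a j]

lemma card_sigma_nextYCandidates_le (hk : 0 < k) {s : ℕ → ℝ} {σ : ℝ}
    (B : Finset (Σ _ : (Fin (m + 1) → Fin k → V) × (Fin (m + 1) → Fin k → V), Fin k → V))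
    (hB : ∀ z ∈ B, z.1 ∈ goodLadders G k (m + 1) α s ∧
      z.2 ∈ Fintype.piFinset (nextXCandidates G α z.1.1 z.1.2) ∧
      (codeg (tensorPow G k) z.2 (z.1.2 (Fin.last m)) : ℝ) ≤ σ) :
    #(B.sigma fun z => Fintype.piFinset (nextYCandidates G z.1.1 z.1.2 z.2)) ≤
      #(goodLadders G k (m + 2) α (Function.update s m σ)) := by
  refine card_le_card_of_injOn (fun w => (Fin.snoc w.1.1.1 w.1.2, Fin.snoc w.1.1.2 w.2)) ?_ ?_
  · rintro ⟨⟨⟨x, y⟩, a⟩, b⟩ hw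
    simp only [coe_sigma, Set.mem_sigma_iff, mem_coe, Fintype.mem_piFinset,
      mem_nextYCandidates] at hw
    obtain ⟨hL, ha, hσ⟩ := hB _ hw.1
    simp only [goodLadders, mem_filter, Fintype.mem_piFinset, mem_nextXCandidates] at hL ha
    simp only [goodLadders, coe_filter, mem_univ, true_and]
    exact hL.2.snoc hk (fun j => (ha j).1.1) (fun j => (hw.2 j).1.2) (fun j => (hw.2 j).1.1) hσ
      (fun j => by rw [codeg_comm]; exact (ha j).1.2) (fun j => (ha j).2)
      (fun j => (hw.2 j).2)
  · rintro ⟨⟨⟨x, y⟩, a⟩, b⟩ - ⟨⟨⟨x', y'⟩, a'⟩, b'⟩ - e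
    simp only [Prod.mk.injEq, Fin.snoc_inj] at e
    obtain ⟨⟨rfl, rfl⟩, rfl, rfl⟩ := e
    rfl

lemma exists_card_goodLadders_succ_ge (hk : 0 < k) (hV : 2 ≤ Fintype.card V) {A : ℝ}
    (hA : ∀ u v, G.Adj u v → A ≤ ({w | G.Adj u w ∧ α ≤ (codeg G v w : ℝ)}.ncard : ℝ))
    (hα : 4 * (m + 1) ≤ α) (hαA : α ≤ A) (s : ℕ → ℝ) :
    ∃ σ : ℝ, 1 ≤ σ ∧
      (#(goodLadders G k (m + 1) α s) : ℝ) *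
          (A ^ k * σ / (4 ^ (k + 1) * Real.logb 2 ((Fintype.card V : ℝ) ^ k))) ≤
        #(goodLadders G k (m + 2) α (Function.update s m σ)) := by
  set S := (goodLadders G k (m + 1) α s).sigma fun p =>
    Fintype.piFinset (nextXCandidates G α p.1 p.2)
  obtain ⟨j, hj⟩ := exists_card_div_le_card_dyadic_class S
    (fun z => codeg (tensorPow G k) z.2 (z.1.2 (Fin.last m))) (N := Fintype.card V ^ k)
    fun z hz => ⟨codeg_pos_of_mem_nextXCandidates hk (by linarith) (mem_sigma.1 hz).2,
      by simpa using codeg_le_card (tensorPow G k) z.2 (z.1.2 (Fin.last m))⟩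
  set B := S.filter fun z => 2 ^ j ≤ codeg (tensorPow G k) z.2 (z.1.2 (Fin.last m)) ∧
    codeg (tensorPow G k) z.2 (z.1.2 (Fin.last m)) < 2 ^ (j + 1)
  refine ⟨2 ^ (j + 1), one_le_pow₀ one_le_two, ?_⟩
  have hM := natLog_add_one_le_two_mul_logb (hV.trans (Nat.le_self_pow hk.ne' _))
  push_cast at hM
  have hS := card_mul_le_card_sigma_nextXCandidates (k := k) (m := m) hA (by linarith) s
  have hA0 : 0 ≤ A := by linarith
  calc (#(goodLadders G k (m + 1) α s) : ℝ) *
        (A ^ k * 2 ^ (j + 1) / (4 ^ (k + 1) * Real.logb 2 ((Fintype.card V : ℝ) ^ k)))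
      = #(goodLadders G k (m + 1) α s) * (A / 2) ^ k * (2 ^ j / 2 ^ k) /
          (2 * Real.logb 2 ((Fintype.card V : ℝ) ^ k)) := by
        rw [show (4 : ℝ) = 2 * 2 by norm_num, mul_pow, div_pow]
        field_simp
        ring
    _ ≤ #(goodLadders G k (m + 1) α s) * (A / 2) ^ k * (2 ^ j / 2 ^ k) /
          (Nat.log 2 (Fintype.card V ^ k) + 1) := by
        gcongr
    _ ≤ #S / (Nat.log 2 (Fintype.card V ^ k) + 1) * (2 ^ j / 2 ^ k) := by
        rw [div_mul_eq_mul_div]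
        gcongr
    _ ≤ #B * (2 ^ j / 2 ^ k) := by gcongr
    _ = ∑ _z ∈ B, (2 ^ j / 2 ^ k : ℝ) := by rw [sum_const, nsmul_eq_mul]
    _ ≤ ∑ z ∈ B, (#(Fintype.piFinset (nextYCandidates G z.1.1 z.1.2 z.2)) : ℝ) :=
        sum_le_sum fun z hz => (codeg_div_le_card_nextYCandidates hk hα
          (mem_sigma.1 (mem_filter.1 hz).1).2).trans'
            (by gcongr; exact_mod_cast (mem_filter.1 hz).2.1)
    _ ≤ #(goodLadders G k (m + 2) α (Function.update s m (2 ^ (j + 1)))) := by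
        rw [← Nat.cast_sum, ← card_sigma]
        exact_mod_cast card_sigma_nextYCandidates_le hk B fun z hz =>
          ⟨(mem_sigma.1 (mem_filter.1 hz).1).1, (mem_sigma.1 (mem_filter.1 hz).1).2,
            by exact_mod_cast (mem_filter.1 hz).2.2.le⟩

end Extension

section Induction

open scoped Classical

variable {V : Type*} [Fintype V] {G : SimpleGraph V} {k : ℕ} {α : ℝ}

lemma two_mul_ncard_edgeSet_pow_le_card_goodLadders_one (hk : 0 < k) (s : ℕ → ℝ) :
    (2 * (G.edgeSet.ncard : ℝ)) ^ k ≤ #(goodLadders G k 1 α s) := by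
  rw [← Nat.card_coe_set_eq, Nat.card_eq_fintype_card, card_edgeSet]
  exact_mod_cast dart_card_eq_twice_card_edges G ▸ card_dart_pow_le_card_goodLadders_one G hk

lemma exists_card_goodLadders_ge (hk : 0 < k) (hV : 2 ≤ Fintype.card V) {A : ℝ}
    (hA : ∀ u v, G.Adj u v → A ≤ ({w | G.Adj u w ∧ α ≤ (codeg G v w : ℝ)}.ncard : ℝ))
    (hαA : α ≤ A) (m : ℕ) (hm : 4 * m ≤ α) :
    ∃ s : ℕ → ℝ, (∀ i, 1 ≤ s i) ∧
      (2 * (G.edgeSet.ncard : ℝ)) ^ k *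
          ∏ i ∈ range m, (A ^ k * s i / (4 ^ (k + 1) * Real.logb 2 ((Fintype.card V : ℝ) ^ k))) ≤
        #(goodLadders G k (m + 1) α s) := by
  induction m with
  | zero =>
    refine ⟨1, fun _ => le_rfl, ?_⟩
    simpa using two_mul_ncard_edgeSet_pow_le_card_goodLadders_one hk 1
  | succ m ih =>
    push_cast at hm
    obtain ⟨s, hs, hcount⟩ := ih (by linarith)
    obtain ⟨σ, hσ, hstep⟩ := exists_card_goodLadders_succ_ge (m := m) hk hV hA (by linarith) hαA s
    refine ⟨Function.update s m σ, fun i => ?_, ?_⟩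
    · rcases eq_or_ne i m with rfl | hi
      · simpa using hσ
      · simpa [hi] using hs i
    · rw [prod_range_succ, Function.update_self,
        prod_congr rfl fun i hi => by rw [Function.update_of_ne (mem_range.1 hi).ne]]
      have hlog : 0 ≤ Real.logb 2 ((Fintype.card V : ℝ) ^ k) :=
        Real.logb_nonneg one_lt_two (one_le_pow₀ (by exact_mod_cast hV.trans' one_le_two))
      have hA0 : 0 ≤ A := by linarith
      have hσ0 : 0 ≤ σ := by linarith
      calc _ ≤ (#(goodLadders G k (m + 1) α s) : ℝ) *
            (A ^ k * σ / (4 ^ (k + 1) * Real.logb 2 ((Fintype.card V : ℝ) ^ k))) := by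
            rw [← mul_assoc]
            gcongr
        _ ≤ _ := hstep

end Induction

lemma ladder_bound_eq_mul_prod {α n D : ℝ} (hn : 0 < n) (k m : ℕ) (s : ℕ → ℝ) :
    α ^ ((m + 1) * k) * n ^ ((((m + 1 : ℕ) : ℝ) / 2 + 1) * k) * (∏ i ∈ range m, s i) / D ^ m =
      (α * n ^ ((3 : ℝ) / 2)) ^ k * ∏ i ∈ range m, ((α * n ^ ((1 : ℝ) / 2)) ^ k * s i / D) := by
  have hpow : n ^ ((((m + 1 : ℕ) : ℝ) / 2 + 1) * k) =
      (n ^ ((3 : ℝ) / 2)) ^ k * ((n ^ ((1 : ℝ) / 2)) ^ k) ^ m := by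
    simp only [← Real.rpow_natCast, ← Real.rpow_mul hn.le, ← Real.rpow_add hn]
    congr 1
    push_cast
    ring
  rw [hpow, prod_div_distrib, prod_mul_distrib, prod_const, prod_const, card_range]
  ring

theorem many_good_ladders (t : ℕ) (ht : 2 ≤ t) (α : ℝ) (hα : 4 * t ≤ α)
    (k : ℕ) (hk : 0 < k) :
    ∃ N : ℕ, ∀ n : ℕ, N ≤ n → ∀ (V : Type) (_ : Fintype V),
      Fintype.card V = n → ∀ G : SimpleGraph V,
        α * (n : ℝ) ^ ((3 : ℝ) / 2) ≤ (G.edgeSet.ncard : ℝ) →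
        (∀ v : V, ((G.neighborSet v).ncard : ℝ) ≤ 12000 * α * (n : ℝ) ^ ((1 : ℝ) / 2)) →
        (∀ u v : V, G.Adj u v →
          α * (n : ℝ) ^ ((1 : ℝ) / 2) ≤
            (({w : V | G.Adj u w ∧ α ≤ (codeg G v w : ℝ)}).ncard : ℝ)) →
        ∃ s : ℕ → ℝ, (∀ i, i < t - 1 → 1 ≤ s i) ∧
          α ^ (t * k) * (n : ℝ) ^ (((t : ℝ) / 2 + 1) * k) * (∏ i ∈ range (t - 1), s i) /
              (4 ^ (k + 1) * Real.logb 2 ((n : ℝ) ^ k)) ^ (t - 1) ≤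
            (Nat.card {p : (Fin t → (Fin k → V)) × (Fin t → (Fin k → V)) //
              IsGoodLadder G k t α s p.1 p.2} : ℝ) := by
  refine ⟨2, fun n hn V _ hcard G hedge _ hexp => ?_⟩
  obtain ⟨m, rfl⟩ : ∃ m, t = m + 1 := ⟨t - 1, by omega⟩
  subst hcard
  have hα0 : 0 ≤ α := by linarith
  have hn2 : (2 : ℝ) ≤ Fintype.card V := by exact_mod_cast hn
  have hαA : α ≤ α * (Fintype.card V : ℝ) ^ ((1 : ℝ) / 2) :=
    le_mul_of_one_le_right hα0 (Real.one_le_rpow (by linarith) (by norm_num))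
  push_cast at hα
  obtain ⟨s, hs, hcount⟩ := exists_card_goodLadders_ge hk hn hexp hαA m (by linarith)
  refine ⟨s, fun i _ => hs i, ?_⟩
  rw [← card_goodLadders, Nat.add_sub_cancel, ladder_bound_eq_mul_prod (by linarith)]
  refine le_trans (mul_le_mul_of_nonneg_right ?_ (prod_nonneg fun i _ => ?_)) hcount
  · have : 0 ≤ (G.edgeSet.ncard : ℝ) := Nat.cast_nonneg _
    exact pow_le_pow_left₀ (by positivity) (by linarith) k
  · have hlog : 0 ≤ Real.logb 2 ((Fintype.card V : ℝ) ^ k) :=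
      Real.logb_nonneg one_lt_two (one_le_pow₀ (by linarith))
    have hs0 : 0 ≤ s i := zero_le_one.trans (hs i)
    positivity
end

section
/- There exists an absolute constant c > 0 such that for every integer t ≥ 2 and every sufficiently large positive integer n, the Turán number of the t×t grid graph satisfies ex(n, F_t) ≥ c·t^{1/2}·n^{3/2}. -/
open SimpleGraph

/-- `G` contains a subgraph isomorphic to `H`: there is an injective graph
homomorphism from `H` to `G`. -/
def Contains {α β : Type*} (G : SimpleGraph α) (H : SimpleGraph β) : Prop :=
  ∃ f : H →g G, Function.Injective f

/-- The `t × t` grid graph `F_t = P_t □ P_t`. -/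
def gridGraph (t : ℕ) : SimpleGraph (Fin t × Fin t) :=
  (pathGraph t).boxProd (pathGraph t)

/-!
Blow up every vertex of the point–line incidence graph of the affine plane over `𝔽_q` into
`s ≈ t / 5` independent copies: the result has `2q²s ≤ n` vertices and `q³s² ≈ √s n^{3/2}` edges.
A copy of the `t × t` grid in it gives a homomorphism `φ` from the grid to the incidence graph
with fibres of size at most `s`. Two points lie on at most one common line, so `φ` maps every
square of the grid to a degenerate closed walk and therefore lifts to a homomorphism `Ψ` into the
tree of non-backtracking walks from `φ (0, 0)`, with no larger fibres. Cutting the tree below a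
deepest vertex `w` whose subtree carries more than two thirds of the grid splits the grid into
two parts of size about `t² / 3`, separated by the fibre of `Ψ` over `w`. But in the grid a
separator `S` between `A` and the rest forces `min |A| |rest| ≤ t |S|`, which is impossible for
`|S| ≤ s < t / 4`. For small `t`, `s = 1` and `φ` is injective, which a single square rules out.
-/

open Finset

lemma List.rtake_cons_of_le {α : Type*} {L : List α} {n : ℕ} (hn : n ≤ L.length) (y : α) :
    (y :: L).rtake n = L.rtake n := by
  simp only [List.rtake, List.length_cons, Nat.sub_add_comm hn, List.drop_succ_cons]

lemma List.IsSuffix.length_lt_of_ne {α : Type*} {l₁ l₂ : List α} (h : l₁ <:+ l₂) (hne : l₁ ≠ l₂) :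
    l₁.length < l₂.length :=
  lt_of_le_of_ne h.length_le fun hl => hne (h.eq_of_length hl)

lemma Finset.sum_le_or_exists_subset_lt_sum_le {ι : Type*} [DecidableEq ι] (I : Finset ι)
    (h : ι → ℕ) {M : ℕ} (hh : ∀ i ∈ I, h i ≤ 2 * M) :
    ∑ i ∈ I, h i ≤ M ∨ ∃ J ⊆ I, M < ∑ i ∈ J, h i ∧ ∑ i ∈ J, h i ≤ 2 * M := by
  induction I using Finset.induction_on with
  | empty => simp
  | insert a I ha ih =>
    rcases ih fun i hi => hh i (mem_insert_of_mem hi) with hI | ⟨J, hJI, hJ⟩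
    · rw [sum_insert ha]
      by_cases hsum : h a + ∑ i ∈ I, h i ≤ M
      · exact Or.inl hsum
      by_cases hbig : M < h a
      · exact Or.inr ⟨{a}, by simp, by simpa using hbig, by simpa using hh a (mem_insert_self a I)⟩
      · exact Or.inr ⟨insert a I, Subset.rfl, by rw [sum_insert ha]; omega,
          by rw [sum_insert ha]; omega⟩
    · exact Or.inr ⟨J, hJI.trans (subset_insert a I), hJ⟩

lemma SimpleGraph.ncard_edgeSet_map {V W : Type*} (e : V ↪ W) (G : SimpleGraph V) :
    (G.map e).edgeSet.ncard = G.edgeSet.ncard := by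
  rw [edgeSet_map, Set.ncard_image_of_injective _ e.sym2Map.injective]

lemma Contains.of_map {V β γ : Type*} {G : SimpleGraph V} {H : SimpleGraph β} (e : V ↪ γ)
    (hH : ∀ v, ∃ w, H.Adj v w) (h : Contains (G.map e) H) : Contains G H := by
  obtain ⟨f, hf⟩ := h
  have hrange : ∀ v, ∃ a, e a = f v := fun v => by
    obtain ⟨w, hw⟩ := hH v
    obtain ⟨a, -, -, ha, -⟩ := (map_adj e G _ _).1 (f.map_adj hw)
    exact ⟨a, ha⟩
  choose g hg using hrange
  refine ⟨⟨g, fun {u v} huv => ?_⟩, fun u v huv => hf ?_⟩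
  · obtain ⟨a, b, hab, ha, hb⟩ := (map_adj e G _ _).1 (f.map_adj huv)
    rwa [e.injective (ha.trans (hg u).symm), e.injective (hb.trans (hg v).symm)] at hab
  · rw [← hg u, ← hg v]
    exact congrArg e huv

namespace TuranGrid

section ReducedWalk

def consTree (V : Type*) : SimpleGraph (List V) where
  Adj L L' := (∃ x, L' = x :: L) ∨ ∃ x, L = x :: L'
  symm := ⟨fun _ _ h => h.symm⟩
  loopless := ⟨fun L h => by
    rcases h with ⟨x, hx⟩ | ⟨x, hx⟩ <;> exact List.cons_ne_self x L hx.symm⟩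

variable {V : Type*}

@[simp]
lemma consTree_adj {L L' : List V} :
    (consTree V).Adj L L' ↔ (∃ x, L' = x :: L) ∨ ∃ x, L = x :: L' := Iff.rfl

variable [DecidableEq V]

/-- Extends a non-backtracking walk, stored with its current endpoint first, by the vertex `x`,
cancelling the last step when `x` is the vertex the walk just came from. -/
def consReduced (x : V) : List V → List V
  | a :: b :: L => if b = x then b :: L else x :: a :: b :: L
  | L => x :: L

def NoBacktrack : List V → Prop
  | a :: b :: L => L.head? ≠ some a ∧ NoBacktrack (b :: L)
  | _ => True

lemma head?_consReduced (x : V) (L : List V) : (consReduced x L).head? = some x := by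
  match L with
  | [] | [_] => rfl
  | a :: b :: L => by_cases h : b = x <;> simp [consReduced, h]

lemma consTree_adj_consReduced (x : V) (L : List V) : (consTree V).Adj L (consReduced x L) := by
  match L with
  | [] | [_] => exact consTree_adj.2 (Or.inl ⟨x, rfl⟩)
  | a :: b :: L =>
    by_cases h : b = x
    · exact consTree_adj.2 (Or.inr ⟨a, by simp [consReduced, h]⟩)
    · exact consTree_adj.2 (Or.inl ⟨x, by simp [consReduced, h]⟩)

lemma NoBacktrack.consReduced {L : List V} (hL : NoBacktrack L) (x : V) :
    NoBacktrack (consReduced x L) := by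
  match L with
  | [] | [_] => simp [TuranGrid.consReduced, NoBacktrack]
  | a :: b :: L =>
    by_cases h : b = x
    · simpa [TuranGrid.consReduced, h] using hL.2
    · simp only [TuranGrid.consReduced, if_neg h]
      exact ⟨by simpa using h, hL⟩

lemma consReduced_consReduced {L : List V} (hL : NoBacktrack L) {a : V} (ha : L.head? = some a)
    (x : V) : consReduced a (consReduced x L) = L := by
  match L, ha with
  | [_], rfl => simp [consReduced]
  | a :: b :: L, rfl =>
    by_cases h : b = x
    · match L, hL with
      | [], _ => simp [consReduced, h]
      | c :: L, hL =>
        have hca : c ≠ a := by simpa [NoBacktrack] using hL.1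
        simp [consReduced, h, hca]
    · simp [consReduced, h]

end ReducedWalk

section GridLift

variable {V : Type*} [DecidableEq V]

/-- Lifts `φ` to the tree of non-backtracking walks from `φ 0 0`: go down the first column,
then along the row. -/
def gridLift (φ : ℕ → ℕ → V) : ℕ → ℕ → List V
  | 0, 0 => consReduced (φ 0 0) []
  | i + 1, 0 => consReduced (φ (i + 1) 0) (gridLift φ i 0)
  | i, j + 1 => consReduced (φ i (j + 1)) (gridLift φ i j)

variable (φ : ℕ → ℕ → V)

lemma head?_gridLift (i j : ℕ) : (gridLift φ i j).head? = some (φ i j) := by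
  cases i <;> cases j <;> rw [gridLift] <;> exact head?_consReduced _ _

lemma noBacktrack_gridLift : ∀ i j, NoBacktrack (gridLift φ i j)
  | 0, 0 => by rw [gridLift]; exact NoBacktrack.consReduced (L := []) trivial _
  | i + 1, 0 => by rw [gridLift]; exact (noBacktrack_gridLift i 0).consReduced _
  | i, j + 1 => by rw [gridLift]; exact (noBacktrack_gridLift i j).consReduced _

lemma gridLift_succ_right (i j : ℕ) :
    gridLift φ i (j + 1) = consReduced (φ i (j + 1)) (gridLift φ i j) := by
  cases i <;> rw [gridLift]

lemma gridLift_succ_left {i j : ℕ}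
    (hsq : ∀ k < j, φ i k = φ (i + 1) (k + 1) ∨ φ i (k + 1) = φ (i + 1) k) :
    gridLift φ (i + 1) j = consReduced (φ (i + 1) j) (gridLift φ i j) := by
  induction j with
  | zero => rw [gridLift]
  | succ j ih =>
    have hR := noBacktrack_gridLift φ i j
    have hhead := head?_gridLift φ i j
    rw [gridLift_succ_right, gridLift_succ_right, ih fun k hk => hsq k (by omega)]
    rcases hsq j (by omega) with hdiag | hanti
    · -- both sides backtrack to `gridLift φ i j`
      rw [← hdiag, consReduced_consReduced hR hhead, consReduced_consReduced hR hhead]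
    · rw [hanti]

end GridLift

section GridHom

open scoped Fin.NatCast

variable {V : Type*} {B : SimpleGraph V}

lemma eq_or_eq_of_adj_of_commonNeighbors_subsingleton
    (hB : ∀ u v, u ≠ v → (B.commonNeighbors u v).Subsingleton) {a b c d : V}
    (hab : B.Adj a b) (hbc : B.Adj b c) (hcd : B.Adj c d) (hda : B.Adj d a) : a = c ∨ b = d := by
  by_contra! h
  exact h.2 (hB a c h.1 ⟨hab, hbc.symm⟩ ⟨hda.symm, hcd⟩)

variable {t : ℕ} [NeZero t]

lemma gridGraph_adj_right {i j : ℕ} (hj : j + 1 < t) :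
    (gridGraph t).Adj ((i : Fin t), (j : Fin t)) ((i : Fin t), ((j + 1 : ℕ) : Fin t)) :=
  boxProd_adj_right.2 <| pathGraph_adj.2 <| Or.inl <| by
    rw [Fin.val_cast_of_lt hj, Fin.val_cast_of_lt (by omega)]

lemma gridGraph_adj_down {i j : ℕ} (hi : i + 1 < t) :
    (gridGraph t).Adj ((i : Fin t), (j : Fin t)) (((i + 1 : ℕ) : Fin t), (j : Fin t)) :=
  boxProd_adj_left.2 <| pathGraph_adj.2 <| Or.inl <| by
    rw [Fin.val_cast_of_lt hi, Fin.val_cast_of_lt (by omega)]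

lemma not_injective_gridGraph_hom
    (hB : ∀ u v, u ≠ v → (B.commonNeighbors u v).Subsingleton) (ht : 2 ≤ t)
    (φ : gridGraph t →g B) : ¬ Function.Injective φ := by
  intro hφ
  have h₁ : 0 + 1 < t := by omega
  have hval : ((0 : ℕ) : Fin t) ≠ ((0 + 1 : ℕ) : Fin t) := by
    rw [Ne, Fin.ext_iff, Fin.val_cast_of_lt (by omega), Fin.val_cast_of_lt h₁]
    omega
  rcases eq_or_eq_of_adj_of_commonNeighbors_subsingleton hB
    (φ.map_adj (gridGraph_adj_right (i := 0) h₁)) (φ.map_adj (gridGraph_adj_down (j := 0 + 1) h₁))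
    (φ.map_adj (gridGraph_adj_right (i := 0 + 1) h₁)).symm
    (φ.map_adj (gridGraph_adj_down (j := 0) h₁)).symm with h | h
  · exact hval (congrArg Prod.fst (hφ h))
  · exact hval (congrArg Prod.fst (hφ h))

variable [DecidableEq V]

/-- Every square is mapped to a degenerate closed walk, so lifting along the first column and
then along a row is compatible with the vertical edges. -/
theorem exists_gridGraph_hom_consTree
    (hB : ∀ u v, u ≠ v → (B.commonNeighbors u v).Subsingleton) (φ : gridGraph t →g B) :
    ∃ Ψ : gridGraph t →g consTree V, ∀ v w, Ψ v = Ψ w → φ v = φ w := by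
  set φ' : ℕ → ℕ → V := fun i j => φ ((i : Fin t), (j : Fin t))
  have hsq : ∀ i j, i + 1 < t → j + 1 < t →
      φ' i j = φ' (i + 1) (j + 1) ∨ φ' i (j + 1) = φ' (i + 1) j := fun i j hi hj =>
    eq_or_eq_of_adj_of_commonNeighbors_subsingleton hB
      (φ.map_adj (gridGraph_adj_right hj)) (φ.map_adj (gridGraph_adj_down hi))
      (φ.map_adj (gridGraph_adj_right hj)).symm (φ.map_adj (gridGraph_adj_down hi)).symm
  have hright : ∀ i j, (consTree V).Adj (gridLift φ' i j) (gridLift φ' i (j + 1)) :=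
    fun i j => gridLift_succ_right φ' i j ▸ consTree_adj_consReduced _ _
  have hdown : ∀ i j, i + 1 < t → j < t →
      (consTree V).Adj (gridLift φ' i j) (gridLift φ' (i + 1) j) := fun i j hi hj => by
    rw [gridLift_succ_left φ' fun k hk => hsq i k hi (by omega)]
    exact consTree_adj_consReduced _ _
  refine ⟨⟨fun v => gridLift φ' v.1 v.2, fun {u v} huv => ?_⟩, fun v w hvw => ?_⟩
  · obtain ⟨⟨i, hi⟩, ⟨j, hj⟩⟩ := u
    obtain ⟨⟨i', hi'⟩, ⟨j', hj'⟩⟩ := v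
    simp only [gridGraph, boxProd_adj, pathGraph_adj, Fin.mk.injEq] at huv ⊢
    rcases huv with ⟨rfl | rfl, rfl⟩ | ⟨rfl | rfl, rfl⟩
    · exact hdown i j hi' hj
    · exact (hdown i' j hi hj).symm
    · exact hright i j
    · exact (hright i j').symm
  · have h : some (φ' v.1 v.2) = some (φ' w.1 w.2) := by
      rw [← head?_gridLift, ← head?_gridLift]
      exact congrArg List.head? hvw
    simpa only [Option.some.injEq, φ', Fin.cast_val_eq_self] using h

end GridHom

section Separator

variable {α β γ : Type*}

lemma exists_apply_mem_of_connected {K : SimpleGraph γ} {G : SimpleGraph α} (hK : K.Connected)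
    (f : K →g G) {A S : Finset α} (hA : ∀ u v, G.Adj u v → u ∈ A → v ∈ A ∨ v ∈ S) {x y : γ}
    (hx : f x ∈ A) (hy : f y ∉ A) : ∃ z, f z ∈ S := by
  obtain ⟨p⟩ := hK.preconnected x y
  obtain ⟨d, -, hd₁, hd₂⟩ := p.exists_boundary_dart (f ⁻¹' A) hx hy
  exact ⟨d.snd, (hA _ _ (f.map_adj d.adj) hd₁).resolve_left hd₂⟩

variable [Fintype α] [Fintype β] [DecidableEq α] [DecidableEq β]
  {G : SimpleGraph α} {H : SimpleGraph β}

omit [Fintype α] in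
lemma card_le_mul_card_image_fst (A : Finset (α × β)) :
    #A ≤ #(A.image Prod.fst) * Fintype.card β :=
  calc #A ≤ #(A.image Prod.fst ×ˢ A.image Prod.snd) := card_le_card subset_product
    _ ≤ #(A.image Prod.fst) * Fintype.card β := by rw [card_product]; gcongr; exact card_le_univ _

omit [Fintype β] in
lemma card_le_card_mul_card_image_snd (A : Finset (α × β)) :
    #A ≤ Fintype.card α * #(A.image Prod.snd) :=
  calc #A ≤ #(A.image Prod.fst ×ˢ A.image Prod.snd) := card_le_card subset_product
    _ ≤ Fintype.card α * #(A.image Prod.snd) := by rw [card_product]; gcongr; exact card_le_univ _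

/-- Either every row meeting `A` also meets the rest, and then meets `S`; or some row misses the
rest, and then every column meeting the rest meets `S`. -/
theorem card_le_or_card_compl_le_of_boxProd (hG : G.Connected) (hH : H.Connected)
    {A S : Finset (α × β)} (hA : ∀ u v, (G □ H).Adj u v → u ∈ A → v ∈ A ∨ v ∈ S) :
    #A ≤ #S * Fintype.card β ∨ #(A ∪ S)ᶜ ≤ Fintype.card α * #S := by
  by_cases hrows : A.image Prod.fst ⊆ (A ∪ S)ᶜ.image Prod.fst
  · left
    have hsub : A.image Prod.fst ⊆ S.image Prod.fst := by
      intro a ha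
      obtain ⟨b, hb⟩ : ∃ b, (a, b) ∈ A := by simpa using ha
      obtain ⟨b', hb'⟩ : ∃ b', (a, b') ∈ (A ∪ S)ᶜ := by simpa using hrows ha
      obtain ⟨z, hz⟩ := exists_apply_mem_of_connected hH (G.boxProdRight H a).toHom hA
        (x := b) (y := b') hb fun h => mem_compl.1 hb' (mem_union_left _ h)
      exact mem_image.2 ⟨_, hz, rfl⟩
    calc #A ≤ #(A.image Prod.fst) * Fintype.card β := card_le_mul_card_image_fst A
      _ ≤ #S * Fintype.card β := by gcongr; exact (card_le_card hsub).trans card_image_le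
  · right
    obtain ⟨a₀, -, ha₀⟩ := not_subset.1 hrows
    have hsub : (A ∪ S)ᶜ.image Prod.snd ⊆ S.image Prod.snd := by
      intro b hb
      obtain ⟨a, hab⟩ : ∃ a, (a, b) ∈ (A ∪ S)ᶜ := by simpa using hb
      by_cases h₀ : (a₀, b) ∈ A
      · obtain ⟨z, hz⟩ := exists_apply_mem_of_connected hG (G.boxProdLeft H b).toHom hA
          (x := a₀) (y := a) h₀ fun h => mem_compl.1 hab (mem_union_left _ h)
        exact mem_image.2 ⟨_, hz, rfl⟩
      · have : (a₀, b) ∉ (A ∪ S)ᶜ := fun h => ha₀ (mem_image.2 ⟨_, h, rfl⟩)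
        simp only [mem_compl, mem_union, not_or, not_and, not_not] at this
        exact mem_image.2 ⟨_, this h₀, rfl⟩
    calc #(A ∪ S)ᶜ ≤ Fintype.card α * #((A ∪ S)ᶜ.image Prod.snd) :=
          card_le_card_mul_card_image_snd _
      _ ≤ Fintype.card α * #S := by gcongr; exact (card_le_card hsub).trans card_image_le

end Separator

section Centroid

variable {X W : Type*} [Fintype X] [DecidableEq W] {K : SimpleGraph X}

def cone (Ψ : X → List W) (w : List W) : Finset X := {x | w <:+ Ψ x}

lemma exists_heavy_cone [Nonempty X] (Ψ : X → List W) :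
    ∃ w, 2 * Fintype.card X < 3 * #(cone Ψ w) ∧
      ∀ w' : List W, w.length < w'.length → 3 * #(cone Ψ w') ≤ 2 * Fintype.card X := by
  classical
  let P k := ∃ w : List W, w.length = k ∧ 2 * Fintype.card X < 3 * #(cone Ψ w)
  let depth := univ.sup fun x => (Ψ x).length
  have hP0 : P 0 := ⟨[], rfl, by simp [cone, Fintype.card_pos]⟩
  have hdepth : ∀ k, P k → k ≤ depth := by
    rintro k ⟨w, rfl, hw⟩
    obtain ⟨x, hx⟩ : (cone Ψ w).Nonempty := card_pos.1 (by omega)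
    exact (mem_filter.1 hx).2.length_le.trans (le_sup (f := fun x => (Ψ x).length) (mem_univ x))
  obtain ⟨w, hw, hheavy⟩ := Nat.findGreatest_spec (Nat.zero_le depth) hP0
  refine ⟨w, hheavy, fun w' hw' => ?_⟩
  by_contra! hw'heavy
  exact Nat.findGreatest_is_greatest (hw ▸ hw') (hdepth _ ⟨w', rfl, hw'heavy⟩) ⟨w', rfl, hw'heavy⟩

lemma eq_or_rtake_eq_of_consTree_adj {w L L' : List W} (hL : w <:+ L) (hLw : L ≠ w)
    (hadj : (consTree W).Adj L L') :
    L' = w ∨ w <:+ L' ∧ L' ≠ w ∧ L'.rtake (w.length + 1) = L.rtake (w.length + 1) := by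
  have hlen := hL.length_lt_of_ne hLw.symm
  rcases consTree_adj.1 hadj with ⟨y, rfl⟩ | ⟨y, rfl⟩
  · refine Or.inr ⟨hL.trans (List.suffix_cons y L), fun h => ?_, List.rtake_cons_of_le hlen y⟩
    have := congrArg List.length h
    simp only [List.length_cons] at this
    omega
  · by_cases hL'w : L' = w
    · exact Or.inl hL'w
    have hwL' := (List.suffix_cons_iff.1 hL).resolve_left fun h => hLw h.symm
    exact Or.inr ⟨hwL', hL'w, (List.rtake_cons_of_le (hwL'.length_lt_of_ne (Ne.symm hL'w)) y).symm⟩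

/-- `A` is a union of branches below a deepest vertex `w` of the tree whose cone holds more than
two thirds of `X`. -/
theorem exists_balanced_of_hom_consTree [Nonempty X] (Ψ : K →g consTree W) {s : ℕ}
    (hs : 3 * s ≤ Fintype.card X) (hfib : ∀ L, #{x | Ψ x = L} ≤ s) :
    ∃ (w : List W) (A : Finset X), Fintype.card X < 3 * #A ∧ 3 * #A ≤ 2 * Fintype.card X ∧
      ∀ u v, K.Adj u v → u ∈ A → v ∈ A ∨ Ψ v = w := by
  classical
  obtain ⟨w, hw, hmax⟩ := exists_heavy_cone (⇑Ψ)
  let R : Finset X := {x ∈ cone Ψ w | Ψ x ≠ w}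
  let branch x : List W := (Ψ x).rtake (w.length + 1)
  have hmemR {x} : x ∈ R ↔ w <:+ Ψ x ∧ Ψ x ≠ w := by simp [R, cone]
  have hbranch : ∀ c ∈ R.image branch, 3 * #{x ∈ R | branch x = c} ≤ 2 * Fintype.card X := by
    intro c hc
    obtain ⟨x₀, hx₀, rfl⟩ := mem_image.1 hc
    have hlen : (branch x₀).length = w.length + 1 := by
      have := (hmemR.1 hx₀).1.length_lt_of_ne (hmemR.1 hx₀).2.symm
      simp only [branch, List.rtake, List.length_drop]
      omega
    refine le_trans ?_ (hmax (branch x₀) (by omega))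
    gcongr
    intro x hx
    simp only [mem_filter] at hx
    simp only [cone, mem_filter, mem_univ, true_and, ← hx.2]
    exact List.drop_suffix _ _
  have hR : Fintype.card X < 3 * #R := by
    have hsplit : #{x ∈ cone Ψ w | Ψ x = w} + #R = #(cone Ψ w) :=
      card_filter_add_card_filter_not _
    have hfibw : #{x ∈ cone Ψ w | Ψ x = w} ≤ s :=
      (card_le_card (monotone_filter_left _ (subset_univ _))).trans (hfib w)
    omega
  obtain hsmall | ⟨J, -, hlow, hhigh⟩ :=
    sum_le_or_exists_subset_lt_sum_le _ (fun c => 3 * #{x ∈ R | branch x = c}) hbranch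
  · rw [← mul_sum, ← card_eq_sum_card_image] at hsmall
    omega
  let A : Finset X := {x ∈ R | branch x ∈ J}
  have hA : #A = ∑ c ∈ J, #{x ∈ R | branch x = c} := by
    rw [card_eq_sum_card_fiberwise (s := A) (t := J) fun x hx => (mem_filter.1 hx).2]
    refine sum_congr rfl fun c hc => ?_
    rw [filter_filter]
    exact congrArg card (filter_congr fun x _ => ⟨And.right, fun h => ⟨h ▸ hc, h⟩⟩)
  rw [← mul_sum, ← hA] at hlow hhigh
  refine ⟨w, A, hlow, hhigh, fun u v huv hu => ?_⟩
  obtain ⟨huR, huJ⟩ := mem_filter.1 hu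
  obtain ⟨hwu, huw⟩ := hmemR.1 huR
  rcases eq_or_rtake_eq_of_consTree_adj hwu huw (Ψ.map_adj huv) with hvw | ⟨hwv, hvw, hbr⟩
  · exact Or.inr hvw
  · have hbr : branch v = branch u := hbr
    exact Or.inl (mem_filter.2 ⟨hmemR.2 ⟨hwv, hvw⟩, hbr ▸ huJ⟩)

end Centroid

lemma false_of_gridGraph_hom_consTree {W : Type*} [DecidableEq W] {t s : ℕ} (hst : 4 * s < t)
    (Ψ : gridGraph t →g consTree W) (hfib : ∀ L, #{v | Ψ v = L} ≤ s) : False := by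
  obtain ⟨m, rfl⟩ : ∃ m, t = m + 1 := ⟨t - 1, by omega⟩
  have hcard : Fintype.card (Fin (m + 1) × Fin (m + 1)) = (m + 1) * (m + 1) := by simp
  obtain ⟨w, A, hlow, hhigh, hA⟩ := exists_balanced_of_hom_consTree Ψ (s := s) (by nlinarith) hfib
  set S : Finset (Fin (m + 1) × Fin (m + 1)) := {v | Ψ v = w}
  have hsep := card_le_or_card_compl_le_of_boxProd (pathGraph_connected m) (pathGraph_connected m)
    (S := S) fun u v huv hu => (hA u v huv hu).imp_right fun h => by simpa [S] using h
  have hcompl : (m + 1) * (m + 1) ≤ #(A ∪ S)ᶜ + #A + #S := by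
    rw [card_compl, hcard]
    have := card_union_le A S
    omega
  have hS : (m + 1) * #S ≤ (m + 1) * s := Nat.mul_le_mul_left _ (hfib w)
  rw [hcard] at hlow hhigh
  simp only [Fintype.card_fin] at hsep
  rcases hsep with h | h <;> nlinarith

section Blowup

variable {V β : Type*} {B : SimpleGraph V} {H : SimpleGraph β}

def blowup (B : SimpleGraph V) (s : ℕ) : SimpleGraph (V × Fin s) := B.comap Prod.fst

lemma exists_hom_card_fiber_le_of_contains_blowup [Fintype β] [DecidableEq V] {s : ℕ}
    (h : Contains (blowup B s) H) : ∃ φ : H →g B, ∀ b, #{v | φ v = b} ≤ s := by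
  obtain ⟨f, hf⟩ := h
  refine ⟨⟨fun v => (f v).1, fun huv => f.map_adj huv⟩, fun b => ?_⟩
  calc #{v | (f v).1 = b} ≤ #(univ : Finset (Fin s)) :=
        card_le_card_of_injOn (fun v => (f v).2) (fun _ _ => mem_coe.2 (mem_univ _))
          fun v hv w hw hvw =>
            hf (Prod.ext ((mem_filter.1 hv).2.trans (mem_filter.1 hw).2.symm) hvw)
    _ = s := by simp

end Blowup

lemma gridGraph_exists_adj {t : ℕ} (ht : 2 ≤ t) (v : Fin t × Fin t) :
    ∃ w, (gridGraph t).Adj v w := by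
  obtain ⟨i, j⟩ := v
  by_cases hj : j.val + 1 < t
  · exact ⟨(i, ⟨j + 1, hj⟩), boxProd_adj_right.2 (pathGraph_adj.2 (Or.inl rfl))⟩
  · refine ⟨(i, ⟨j - 1, by omega⟩), boxProd_adj_right.2 (pathGraph_adj.2 (Or.inr ?_))⟩
    simp only
    omega

theorem not_contains_gridGraph_blowup {V : Type*} [DecidableEq V] {B : SimpleGraph V}
    (hB : ∀ u v, u ≠ v → (B.commonNeighbors u v).Subsingleton) {s t : ℕ} (ht : 2 ≤ t)
    (hs : s = 1 ∨ 4 * s < t) : ¬ Contains (blowup B s) (gridGraph t) := by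
  intro h
  obtain ⟨φ, hφ⟩ := exists_hom_card_fiber_le_of_contains_blowup h
  have : NeZero t := ⟨by omega⟩
  rcases hs with rfl | hst
  · exact not_injective_gridGraph_hom hB ht φ fun v w hvw =>
      card_le_one.1 (hφ (φ w)) v (by simpa using hvw) w (by simp)
  · obtain ⟨Ψ, hΨ⟩ := exists_gridGraph_hom_consTree hB φ
    refine false_of_gridGraph_hom_consTree hst Ψ fun L => ?_
    rcases eq_empty_or_nonempty ({v | Ψ v = L} : Finset _) with hL | ⟨v₀, hv₀⟩
    · simp [hL]
    refine (card_le_card fun v hv => ?_).trans (hφ (φ v₀))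
    simp only [mem_filter, mem_univ, true_and] at hv hv₀ ⊢
    exact hΨ v v₀ (hv.trans hv₀.symm)

section Incidence

variable (F : Type*) [CommRing F]

/-- The incidence graph between the points `(x, y)` of the affine plane over `F` and its
non-vertical lines `y = a * x + b`, written `(a, b)`. -/
def incidenceGraph : SimpleGraph ((F × F) ⊕ (F × F)) where
  Adj
    | .inl p, .inr l | .inr l, .inl p => p.2 = l.1 * p.1 + l.2
    | _, _ => False
  symm := ⟨by rintro (_ | _) (_ | _) h <;> exact h⟩
  loopless := ⟨by rintro (_ | _) h <;> exact h⟩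

variable {F} [NoZeroDivisors F]

lemma eq_or_eq_of_incident {x₁ y₁ x₂ y₂ a₁ b₁ a₂ b₂ : F} (h₁₁ : y₁ = a₁ * x₁ + b₁)
    (h₂₁ : y₂ = a₁ * x₂ + b₁) (h₁₂ : y₁ = a₂ * x₁ + b₂) (h₂₂ : y₂ = a₂ * x₂ + b₂) :
    (x₁, y₁) = (x₂, y₂) ∨ (a₁, b₁) = (a₂, b₂) := by
  have h : (x₁ - x₂) * (a₁ - a₂) = 0 := by linear_combination h₂₁ - h₂₂ - h₁₁ + h₁₂
  rcases mul_eq_zero.1 h with hx | ha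
  · have hx := sub_eq_zero.1 hx
    exact Or.inl (Prod.ext hx (by linear_combination h₁₁ - h₂₁ + a₁ * hx))
  · have ha := sub_eq_zero.1 ha
    exact Or.inr (Prod.ext ha (by linear_combination h₁₂ - h₁₁ - x₁ * ha))

theorem incidenceGraph_commonNeighbors_subsingleton {u v : (F × F) ⊕ (F × F)} (huv : u ≠ v) :
    ((incidenceGraph F).commonNeighbors u v).Subsingleton := by
  rintro w₁ ⟨hu₁, hv₁⟩ w₂ ⟨hu₂, hv₂⟩
  rcases u with ⟨x₁, y₁⟩ | ⟨x₁, y₁⟩ <;> rcases v with ⟨x₂, y₂⟩ | ⟨x₂, y₂⟩ <;>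
    rcases w₁ with ⟨a₁, b₁⟩ | ⟨a₁, b₁⟩ <;> rcases w₂ with ⟨a₂, b₂⟩ | ⟨a₂, b₂⟩ <;>
    simp only [mem_neighborSet, incidenceGraph] at hu₁ hv₁ hu₂ hv₂ <;> try contradiction
  · exact congrArg Sum.inr ((eq_or_eq_of_incident hu₁ hv₁ hu₂ hv₂).resolve_left
      fun h => huv (congrArg Sum.inl h))
  · exact congrArg Sum.inl ((eq_or_eq_of_incident hu₁ hu₂ hv₁ hv₂).resolve_right
      fun h => huv (congrArg Sum.inr h))

end Incidence

section EdgeCount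

variable {F : Type*} [Field F] [Fintype F]

/-- Each of the `q²` lines carries `q` points, and each incidence yields `s²` edges of the
blow-up. -/
lemma card_pow_three_mul_sq_le_ncard_edgeSet_blowup (s : ℕ) :
    Fintype.card F ^ 3 * s ^ 2 ≤ (blowup (incidenceGraph F) s).edgeSet.ncard := by
  let edge : (F × F) × F × Fin s × Fin s → (blowup (incidenceGraph F) s).edgeSet :=
    fun z => ⟨s((.inl (z.2.1, z.1.1 * z.2.1 + z.1.2), z.2.2.1), (.inr z.1, z.2.2.2)), rfl⟩
  have hinj : Function.Injective edge := by
    rintro ⟨l, x, α, β⟩ ⟨l', x', α', β'⟩ h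
    have h := Sym2.eq_iff.1 (congrArg Subtype.val h)
    simp only [Prod.mk.injEq, Sum.inl.injEq, Sum.inr.injEq, reduceCtorEq, false_and, and_false,
      or_false] at h
    obtain ⟨⟨⟨rfl, -⟩, rfl⟩, rfl, rfl⟩ := h
    rfl
  have h := Nat.card_le_card_of_injective edge hinj
  rw [Nat.card_coe_set_eq] at h
  convert h using 1
  simp only [Nat.card_eq_fintype_card, Fintype.card_prod, Fintype.card_fin]
  ring

end EdgeCount

theorem exists_gridGraph_free_of_card_le (F : Type*) [Field F] [Fintype F] [DecidableEq F]
    {s t n : ℕ} (hn : 2 * Fintype.card F ^ 2 * s ≤ n) (ht : 2 ≤ t) (hs : s = 1 ∨ 4 * s < t) :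
    ∃ G : SimpleGraph (Fin n), Fintype.card F ^ 3 * s ^ 2 ≤ G.edgeSet.ncard ∧
      ¬ Contains G (gridGraph t) := by
  have hcard : Fintype.card ((F × F ⊕ F × F) × Fin s) ≤ n := by
    simpa [Fintype.card_sum, Fintype.card_prod, two_mul, sq, add_mul] using hn
  let e := (Fintype.equivFin _).toEmbedding.trans (Fin.castLEEmb hcard)
  refine ⟨(blowup (incidenceGraph F) s).map e, ?_, fun h => ?_⟩
  · rw [ncard_edgeSet_map]
    exact card_pow_three_mul_sq_le_ncard_edgeSet_blowup s
  · exact not_contains_gridGraph_blowup (fun _ _ => incidenceGraph_commonNeighbors_subsingleton)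
      ht hs (Contains.of_map e (gridGraph_exists_adj ht) h)

lemma exists_prime_sq_mul_le_lt_four_mul {k x : ℕ} (hk : 0 < k) (hx : 4 * k ≤ x) :
    ∃ q, q.Prime ∧ q ^ 2 * k ≤ x ∧ x < 4 * q ^ 2 * k := by
  have hm : 2 ≤ (x / k).sqrt := Nat.le_sqrt.2 ((Nat.le_div_iff_mul_le hk).2 hx)
  obtain ⟨q, hq, hlt, hle⟩ := Nat.exists_prime_lt_and_le_two_mul ((x / k).sqrt / 2) (by omega)
  refine ⟨q, hq, (Nat.le_div_iff_mul_le hk).1 ?_, (Nat.div_lt_iff_lt_mul hk).1 ?_⟩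
  · calc q ^ 2 ≤ (x / k).sqrt ^ 2 := Nat.pow_le_pow_left (by omega) 2
      _ ≤ x / k := Nat.sqrt_le' _
  · calc x / k < ((x / k).sqrt + 1) ^ 2 := Nat.lt_succ_sqrt' _
      _ ≤ (2 * q) ^ 2 := Nat.pow_le_pow_left (by omega) 2
      _ = 4 * q ^ 2 := by ring

lemma mul_rpow_half_mul_rpow_three_halves_le {c t n E : ℝ} (ht : 0 ≤ t)
    (hn : 0 ≤ n) (hE : 0 ≤ E) (h : c ^ 2 * t * n ^ 3 ≤ E ^ 2) :
    c * t ^ ((1 : ℝ) / 2) * n ^ ((3 : ℝ) / 2) ≤ E := by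
  refine le_of_pow_le_pow_left₀ two_ne_zero hE ?_
  have ht' : (t ^ ((1 : ℝ) / 2)) ^ 2 = t := by
    rw [← Real.rpow_natCast, ← Real.rpow_mul ht]; norm_num
  have hn' : (n ^ ((3 : ℝ) / 2)) ^ 2 = n ^ 3 := by
    rw [← Real.rpow_natCast, ← Real.rpow_mul hn, ← Real.rpow_natCast]; norm_num
  rwa [mul_pow, mul_pow, ht', hn']

end TuranGrid

open TuranGrid in
/-- There is an absolute constant `c > 0` such that for every `t ≥ 2` and every
sufficiently large `n`, `ex(n, F_t) ≥ c · t^{1/2} · n^{3/2}`: there is an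
`n`-vertex graph with at least `c · t^{1/2} · n^{3/2}` edges and no copy of
`F_t`. -/
theorem turan_grid_lower_sqrt_t :
    ∃ c : ℝ, 0 < c ∧ ∀ t : ℕ, 2 ≤ t → ∃ N : ℕ, ∀ n : ℕ, N ≤ n →
      ∃ G : SimpleGraph (Fin n),
        c * (t : ℝ) ^ ((1 : ℝ) / 2) * (n : ℝ) ^ ((3 : ℝ) / 2) ≤ (G.edgeSet.ncard : ℝ) ∧
        ¬ Contains G (gridGraph t) := by
  refine ⟨1 / 72, by norm_num, fun t ht => ⟨8 * max 1 (t / 5), fun n hn => ?_⟩⟩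
  set s := max 1 (t / 5)
  obtain ⟨q, hq, hqn, hnq⟩ := exists_prime_sq_mul_le_lt_four_mul (k := 2 * s) (x := n)
    (by omega) (by omega)
  have : Fact q.Prime := ⟨hq⟩
  obtain ⟨G, hG, hfree⟩ := exists_gridGraph_free_of_card_le (ZMod q) (s := s) (n := n)
    (by rw [ZMod.card]; linarith) ht (by omega)
  rw [ZMod.card] at hG
  refine ⟨G, le_trans ?_ (Nat.cast_le.2 hG), hfree⟩
  have hkey : t * n ^ 3 ≤ 5120 * (q ^ 3 * s ^ 2) ^ 2 :=
    calc t * n ^ 3 ≤ (10 * s) * (8 * q ^ 2 * s) ^ 3 :=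
          Nat.mul_le_mul (by omega) (Nat.pow_le_pow_left (by linarith) 3)
      _ = 5120 * (q ^ 3 * s ^ 2) ^ 2 := by ring
  have hkey' : (t : ℝ) * n ^ 3 ≤ 5120 * ((q ^ 3 * s ^ 2 : ℕ) : ℝ) ^ 2 := by exact_mod_cast hkey
  refine mul_rpow_half_mul_rpow_three_halves_le (by positivity) (by positivity)
    (by positivity) ?_
  nlinarith [mul_nonneg (Nat.cast_nonneg (α := ℝ) t) (pow_nonneg (Nat.cast_nonneg (α := ℝ) n) 3)]
end
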